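/- Fix x ∈ ℝ^d with ‖x‖₂ ≤ 1 and S > 0, and define F(Θ) = σ(Θ x) for Θ ∈ ℝ^{K×d}, where σ : ℝ^K → Δ^{K+1}_{>0} is the softmax map σ(z)_k = e^{z_k}/(1 + Σ_{j=1}^K e^{z_j}) for k ∈ [K] and σ(z)_0 = 1/(1 + Σ_{j=1}^K e^{z_j}). Let S_set = { Θ ∈ ℝ^{K×d} : every row θ^{(k)} of Θ satisfies ‖θ^{(k)}‖₂ ≤ S }. Then the convex hull of F(S_set) is contained in F( { Θ ∈ ℝ^{K×d} : ‖Θ‖_F ≤ √K · S } ). -/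

import Mathlib

open scoped RealInnerProductSpace

/-- The softmax image `F(Θ) = σ(Θx) ∈ ℝ^{K+1}`:  coordinate `0` is
`1/(1 + Σ_j e^{⟨x, θ^{(j)}⟩})` and coordinate `k ∈ [K]` is
`e^{⟨x, θ^{(k)}⟩}/(1 + Σ_j e^{⟨x, θ^{(j)}⟩})`, where `Θ` has rows `θ^{(1)}, …, θ^{(K)}`. -/
noncomputable def softmaxF {K d : ℕ} (x : EuclideanSpace ℝ (Fin d))
    (Θ : Fin K → EuclideanSpace ℝ (Fin d)) : Fin (K + 1) → ℝ :=
  Fin.cons (1 / (1 + ∑ j, Real.exp ⟪x, Θ j⟫))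
    (fun k => Real.exp ⟪x, Θ k⟫ / (1 + ∑ j, Real.exp ⟪x, Θ j⟫))

/-!
A point `p` of the open simplex is `F(Θ)` exactly when `p_k / p_0 = exp ⟪x, θ^{(k)}⟫` for every
`k ∈ [K]`. If the rows satisfy `‖θ^{(k)}‖ ≤ S`, these log-odds are bounded by `B = S‖x‖`, and
conversely any log-odds bounded by `B` are realised by rows `θ^{(k)} ∈ ℝx` of norm at most `S`.
Hence the image of the row-bounded set is the polytope
`{p ∈ Δ : e^{-B} p_0 ≤ p_k ≤ e^B p_0}`, which is convex, so it is its own convex hull; and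
row norms at most `S` give Frobenius norm at most `√K S`.
-/

open Real Finset

theorem Fin.sum_eq_mul_one_add_sum_of_succ_eq_mul {K : ℕ} {p : Fin (K + 1) → ℝ}
    {r : Fin K → ℝ} (hp : ∀ k, p k.succ = r k * p 0) :
    ∑ i, p i = p 0 * (1 + ∑ k, r k) := by
  simp only [Fin.sum_univ_succ, hp, mul_add, mul_sum]
  ring_nf

theorem Fin.eq_of_sum_eq_one_of_succ_eq_mul {K : ℕ} {p q : Fin (K + 1) → ℝ} (r : Fin K → ℝ)
    (hp : ∑ i, p i = 1) (hq : ∑ i, q i = 1)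
    (hpr : ∀ k, p k.succ = r k * p 0) (hqr : ∀ k, q k.succ = r k * q 0) : p = q := by
  rw [Fin.sum_eq_mul_one_add_sum_of_succ_eq_mul hpr] at hp
  rw [Fin.sum_eq_mul_one_add_sum_of_succ_eq_mul hqr] at hq
  have h0 : p 0 = q 0 :=
    mul_right_cancel₀ (right_ne_zero_of_mul_eq_one hp) (hp.trans hq.symm)
  funext i
  cases i using Fin.cases with
  | zero => exact h0
  | succ k => rw [hpr, hqr, h0]

theorem exists_norm_le_inner_eq {E : Type*} [NormedAddCommGroup E] [InnerProductSpace ℝ E]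
    {x : E} {S a : ℝ} (hS : 0 ≤ S) (ha : |a| ≤ S * ‖x‖) : ∃ θ : E, ‖θ‖ ≤ S ∧ ⟪x, θ⟫ = a := by
  rcases eq_or_ne x 0 with rfl | hx
  · refine ⟨0, by simpa using hS, ?_⟩
    simp_all
  · have hx' : 0 < ‖x‖ := norm_pos_iff.2 hx
    refine ⟨(a / ‖x‖ ^ 2) • x, ?_, ?_⟩
    · calc ‖(a / ‖x‖ ^ 2) • x‖ = |a| / ‖x‖ := by
            rw [norm_smul, norm_div, norm_pow, norm_norm, norm_eq_abs]
            field_simp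
        _ ≤ S := (div_le_iff₀ hx').2 ha
    · rw [real_inner_smul_right, real_inner_self_eq_norm_sq]
      field_simp

def boundedOddsSimplex (K : ℕ) (B : ℝ) : Set (Fin (K + 1) → ℝ) :=
  {p | 0 < p 0 ∧ ∑ i, p i = 1 ∧
    ∀ k : Fin K, exp (-B) * p 0 ≤ p k.succ ∧ p k.succ ≤ exp B * p 0}

theorem convex_boundedOddsSimplex (K : ℕ) (B : ℝ) : Convex ℝ (boundedOddsSimplex K B) := by
  rintro p ⟨hp0, hp1, hp⟩ q ⟨hq0, hq1, hq⟩ a b ha hb hab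
  simp only [boundedOddsSimplex, Set.mem_ofPred_eq, Pi.add_apply, Pi.smul_apply, smul_eq_mul]
  refine ⟨convex_Ioi (0 : ℝ) hp0 hq0 ha hb hab, ?_, fun k => ⟨?_, ?_⟩⟩
  · rw [sum_add_distrib, ← mul_sum, ← mul_sum, hp1, hq1, mul_one, mul_one, hab]
  · linarith [mul_le_mul_of_nonneg_left (hp k).1 ha, mul_le_mul_of_nonneg_left (hq k).1 hb]
  · linarith [mul_le_mul_of_nonneg_left (hp k).2 ha, mul_le_mul_of_nonneg_left (hq k).2 hb]

section Softmax

variable {K d : ℕ} (x : EuclideanSpace ℝ (Fin d)) (Θ : Fin K → EuclideanSpace ℝ (Fin d))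

theorem softmaxF_zero_pos : 0 < softmaxF x Θ 0 := by
  simp only [softmaxF, Fin.cons_zero]
  positivity

theorem softmaxF_succ (k : Fin K) : softmaxF x Θ k.succ = exp ⟪x, Θ k⟫ * softmaxF x Θ 0 := by
  simp only [softmaxF, Fin.cons_succ, Fin.cons_zero, mul_one_div]

theorem sum_softmaxF : ∑ i, softmaxF x Θ i = 1 := by
  have hD : 0 < 1 + ∑ j, exp ⟪x, Θ j⟫ := by positivity
  simp only [softmaxF, Fin.sum_cons, ← sum_div, ← add_div]
  exact div_self hD.ne'

theorem softmaxF_eq_of_succ_eq_mul {p : Fin (K + 1) → ℝ} (hp : ∑ i, p i = 1)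
    (hodds : ∀ k, p k.succ = exp ⟪x, Θ k⟫ * p 0) : softmaxF x Θ = p :=
  Fin.eq_of_sum_eq_one_of_succ_eq_mul _ (sum_softmaxF x Θ) hp (softmaxF_succ x Θ) hodds

theorem softmaxF_mem_boundedOddsSimplex {Θ : Fin K → EuclideanSpace ℝ (Fin d)} {S : ℝ}
    (hΘ : ∀ k, ‖Θ k‖ ≤ S) : softmaxF x Θ ∈ boundedOddsSimplex K (S * ‖x‖) := by
  refine ⟨softmaxF_zero_pos x Θ, sum_softmaxF x Θ, fun k => ?_⟩
  have hinner : |⟪x, Θ k⟫| ≤ S * ‖x‖ :=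
    (abs_real_inner_le_norm x (Θ k)).trans_eq (mul_comm _ _) |>.trans
      (mul_le_mul_of_nonneg_right (hΘ k) (norm_nonneg x))
  obtain ⟨hlo, hhi⟩ := abs_le.1 hinner
  have h0 := (softmaxF_zero_pos x Θ).le
  rw [softmaxF_succ]
  exact ⟨mul_le_mul_of_nonneg_right (exp_le_exp.2 hlo) h0,
    mul_le_mul_of_nonneg_right (exp_le_exp.2 hhi) h0⟩

theorem boundedOddsSimplex_subset_softmaxF_image {S : ℝ} (hS : 0 ≤ S) :
    boundedOddsSimplex K (S * ‖x‖) ⊆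
      softmaxF x '' {Θ : Fin K → EuclideanSpace ℝ (Fin d) | ∀ k, ‖Θ k‖ ≤ S} := by
  rintro p ⟨hp0, hp1, hodds⟩
  have hratio : ∀ k : Fin K, 0 < p k.succ / p 0 := fun k =>
    div_pos ((mul_pos (exp_pos _) hp0).trans_le (hodds k).1) hp0
  have hlog : ∀ k : Fin K, |log (p k.succ / p 0)| ≤ S * ‖x‖ := fun k => by
    rw [abs_le, le_log_iff_exp_le (hratio k), log_le_iff_le_exp (hratio k), le_div_iff₀ hp0,
      div_le_iff₀ hp0]
    exact hodds k
  choose Θ hΘS hΘx using fun k => exists_norm_le_inner_eq hS (hlog k)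
  refine ⟨Θ, hΘS, softmaxF_eq_of_succ_eq_mul x Θ hp1 fun k => ?_⟩
  rw [hΘx, exp_log (hratio k), div_mul_cancel₀ _ hp0.ne']

theorem softmaxF_image_eq_boundedOddsSimplex {S : ℝ} (hS : 0 ≤ S) :
    softmaxF x '' {Θ : Fin K → EuclideanSpace ℝ (Fin d) | ∀ k, ‖Θ k‖ ≤ S} =
      boundedOddsSimplex K (S * ‖x‖) :=
  Set.Subset.antisymm (Set.image_subset_iff.2 fun _ => softmaxF_mem_boundedOddsSimplex x)
    (boundedOddsSimplex_subset_softmaxF_image x hS)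

end Softmax

theorem sqrt_sum_sq_norm_le_sqrt_card_mul {K : ℕ} {E : Type*} [SeminormedAddCommGroup E]
    {Θ : Fin K → E} {S : ℝ} (hS : 0 ≤ S) (hΘ : ∀ k, ‖Θ k‖ ≤ S) :
    √(∑ k, ‖Θ k‖ ^ 2) ≤ √K * S := by
  calc √(∑ k, ‖Θ k‖ ^ 2) ≤ √(∑ _k : Fin K, S ^ 2) :=
        sqrt_le_sqrt (sum_le_sum fun k _ => pow_le_pow_left₀ (norm_nonneg _) (hΘ k) 2)
    _ = √K * S := by
        rw [sum_const, card_univ, Fintype.card_fin, nsmul_eq_mul,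
          sqrt_mul (Nat.cast_nonneg K), sqrt_sq hS]

theorem stmt_19_general {K d : ℕ} (x : EuclideanSpace ℝ (Fin d))
    (S : ℝ) (hS : 0 < S) :
    convexHull ℝ (softmaxF x '' {Θ : Fin K → EuclideanSpace ℝ (Fin d) | ∀ k, ‖Θ k‖ ≤ S}) ⊆
      softmaxF x '' {Θ : Fin K → EuclideanSpace ℝ (Fin d) | Real.sqrt (∑ k, ‖Θ k‖ ^ 2) ≤ Real.sqrt K * S} := by
  have hconvex : Convex ℝ (softmaxF x '' {Θ : Fin K → EuclideanSpace ℝ (Fin d) | ∀ k, ‖Θ k‖ ≤ S}) := by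
    rw [softmaxF_image_eq_boundedOddsSimplex x hS.le]
    exact convex_boundedOddsSimplex K _
  rw [hconvex.convexHull_eq]
  exact Set.image_mono fun Θ => sqrt_sum_sq_norm_le_sqrt_card_mul hS.le

/-- the convex hull of the softmax image of the set of matrices whose rows have
norm at most `S` is contained in the softmax image of the Frobenius ball of radius `√K S`. -/
theorem stmt_19 {K d : ℕ} (x : EuclideanSpace ℝ (Fin d)) (hx : ‖x‖ ≤ 1)
    (S : ℝ) (hS : 0 < S) :
    convexHull ℝ (softmaxF x '' {Θ : Fin K → EuclideanSpace ℝ (Fin d) | ∀ k, ‖Θ k‖ ≤ S}) ⊆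
      softmaxF x '' {Θ : Fin K → EuclideanSpace ℝ (Fin d) | Real.sqrt (∑ k, ‖Θ k‖ ^ 2) ≤ Real.sqrt K * S} :=
  stmt_19_general x S hS
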